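/- arXiv:2404.13780 — 2 statements merged into one kernel-verified Lean document; each statement's English description precedes it below -/
import Mathlib

section
/- Energy inequality for the extracellular (media) equation: let δ, P̃, Pe, Da, K, T > 0, φ ∈ (0,1), let g : [0,T] → ℝ be continuous, let c₂ : [0,1] × [0,T] → ℝ be continuous, and let c₁ : [0,1] × [0,T] → ℝ be such that c₁, ∂_t c₁, ∂_x c₁, ∂_{xx} c₁ are continuous on [0,1] × [0,T], and suppose that φ·∂_t c₁ = ∂_{xx} c₁ - Pe·∂_x c₁ - Da·c₁ + (Da/K)·c₂ on (0,1) × (0,T], ∂_x c₁(1,t) = 0 for t ∈ (0,T], and ∂_x c₁(0,t) = Pe·c₁(0,t) + δ·P̃·(c₁(0,t) - g(t)) for t ∈ (0,T]. Then for all ε₂, ε₃ > 0 and t ∈ (0,T]: (φ/2)·(d/dt)∫_0^1 c₁(x,t)² dx + Da·∫_0^1 c₁(x,t)² dx + ∫_0^1 (∂_x c₁(x,t))² dx + (Pe/2)·c₁(1,t)² + (δ·P̃ + Pe/2)·c₁(0,t)² ≤ δ·P̃·(ε₂·g(t)² + c₁(0,t)²/(4ε₂)) + (Da/K)·(ε₃·∫_0^1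 c₂(x,t)² dx + (1/(4ε₃))·∫_0^1 c₁(x,t)² dx). -/
/-!
Multiply the equation by `c₁` and integrate in `x`. Since
`c₁ · ∂ₓₓc₁ - Pe · c₁ · ∂ₓc₁ = ∂ₓ (c₁ · ∂ₓc₁ - (Pe / 2) · c₁²) - (∂ₓc₁)²`, the boundary conditions
turn this into an energy identity with right-hand side `δ P̃ c₁(0,t) g(t) + (Da / K) ∫ c₁ c₂`,
and Young's inequality `ab ≤ ε b² + a² / (4ε)` bounds both terms. The time derivative
of `∫ c₁²` is `2 ∫ c₁ ∂ₜc₁`: write `c₁(x,s)²` as its value at time `0` plus a time integral and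
exchange the order of integration.
-/

open MeasureTheory intervalIntegral Set Filter Function

lemma mul_le_mul_sq_add_sq_div {ε : ℝ} (hε : 0 < ε) (a b : ℝ) :
    a * b ≤ ε * b ^ 2 + a ^ 2 / (4 * ε) := by
  have hsq : 0 ≤ (2 * ε * b - a) ^ 2 / (4 * ε) := by positivity
  have hexpand : (2 * ε * b - a) ^ 2 / (4 * ε) = ε * b ^ 2 + a ^ 2 / (4 * ε) - a * b := by
    field_simp
    ring
  linarith

lemma integral_mul_le_mul_integral_sq_add {f g : ℝ → ℝ} {a b ε : ℝ} (hab : a ≤ b) (hε : 0 < ε)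
    (hf : ContinuousOn f (Icc a b)) (hg : ContinuousOn g (Icc a b)) :
    ∫ x in a..b, f x * g x ≤
      ε * (∫ x in a..b, g x ^ 2) + 1 / (4 * ε) * ∫ x in a..b, f x ^ 2 := by
  have hint {h : ℝ → ℝ} (h_cont : ContinuousOn h (Icc a b)) : IntervalIntegrable h volume a b :=
    h_cont.intervalIntegrable_of_Icc hab
  calc ∫ x in a..b, f x * g x
      ≤ ∫ x in a..b, (ε * g x ^ 2 + 1 / (4 * ε) * f x ^ 2) :=
        integral_mono_on hab (hint (hf.mul hg)) (hint (by fun_prop)) fun x _ => by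
          rw [one_div_mul_eq_div]
          exact mul_le_mul_sq_add_sq_div hε (f x) (g x)
    _ = ε * (∫ x in a..b, g x ^ 2) + 1 / (4 * ε) * ∫ x in a..b, f x ^ 2 := by
      rw [integral_add (hint (by fun_prop)) (hint (by fun_prop)),
        intervalIntegral.integral_const_mul, intervalIntegral.integral_const_mul]

section ParametricIntegral

variable {a b t₀ t₁ : ℝ} {u u' : ℝ → ℝ → ℝ}

lemma continuousOn_intervalIntegral_of_continuousOn_uncurry (hab : a ≤ b)
    (hu : ContinuousOn (uncurry u) (Icc a b ×ˢ Icc t₀ t₁)) :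
    ContinuousOn (fun s => ∫ x in a..b, u x s) (Icc t₀ t₁) := by
  obtain ⟨M, hM⟩ := (isCompact_Icc.prod isCompact_Icc).exists_bound_of_continuousOn hu
  have hIoc : uIoc a b ⊆ Icc a b := by rw [uIoc_of_le hab]; exact Ioc_subset_Icc_self
  intro t ht
  refine continuousWithinAt_of_dominated_interval (bound := fun _ => M) ?_ ?_
    intervalIntegrable_const ?_
  · filter_upwards [self_mem_nhdsWithin] with s hs
    exact ((hu.uncurry_right s hs).mono hIoc).aestronglyMeasurable measurableSet_uIoc
  · filter_upwards [self_mem_nhdsWithin] with s hs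
    exact Eventually.of_forall fun x hx => hM (x, s) ⟨hIoc hx, hs⟩
  · exact Eventually.of_forall fun x hx => hu.uncurry_left x (hIoc hx) t ht

lemma integral_integral_swap_of_continuousOn (hab : a ≤ b) (ht : t₀ ≤ t₁)
    (hu : ContinuousOn (uncurry u) (Icc a b ×ˢ Icc t₀ t₁)) :
    ∫ x in a..b, ∫ s in t₀..t₁, u x s = ∫ s in t₀..t₁, ∫ x in a..b, u x s := by
  have hint : IntegrableOn (uncurry u) (Ioc a b ×ˢ Ioc t₀ t₁) :=
    (hu.integrableOn_compact (isCompact_Icc.prod isCompact_Icc)).mono_set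
      (prod_mono Ioc_subset_Icc_self Ioc_subset_Icc_self)
  rw [IntegrableOn, Measure.volume_eq_prod, ← Measure.prod_restrict] at hint
  simp only [integral_of_le hab, integral_of_le ht]
  exact integral_integral_swap hint

lemma integral_eq_integral_add_integral_integral_of_hasDerivWithinAt (hab : a ≤ b)
    (hu : ContinuousOn (uncurry u) (Icc a b ×ˢ Icc t₀ t₁))
    (hu' : ContinuousOn (uncurry u') (Icc a b ×ˢ Icc t₀ t₁))
    (hderiv : ∀ x ∈ Icc a b, ∀ s ∈ Icc t₀ t₁, HasDerivWithinAt (u x ·) (u' x s) (Icc t₀ t₁) s)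
    {s : ℝ} (hs : s ∈ Icc t₀ t₁) :
    ∫ x in a..b, u x s = (∫ x in a..b, u x t₀) + ∫ r in t₀..s, ∫ x in a..b, u' x r := by
  have hsub : Icc t₀ s ⊆ Icc t₀ t₁ := Icc_subset_Icc_right hs.2
  have hftc : ∀ x ∈ uIcc a b, ∫ r in t₀..s, u' x r = u x s - u x t₀ := fun x hx => by
    rw [uIcc_of_le hab] at hx
    refine integral_eq_sub_of_hasDerivAt_of_le hs.1 ((hu.uncurry_left x hx).mono hsub)
      (fun r hr => ?_) (((hu'.uncurry_left x hx).mono hsub).intervalIntegrable_of_Icc hs.1)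
    exact (hderiv x hx r (hsub (Ioo_subset_Icc_self hr))).hasDerivAt
      (Icc_mem_nhds hr.1 (hr.2.trans_le hs.2))
  have hslice (r : ℝ) (hr : r ∈ Icc t₀ t₁) : IntervalIntegrable (u · r) volume a b :=
    (hu.uncurry_right r hr).intervalIntegrable_of_Icc hab
  rw [← integral_integral_swap_of_continuousOn hab hs.1 (hu'.mono (prod_mono_right hsub)),
    integral_congr hftc, integral_sub (hslice s hs) (hslice t₀ ⟨le_rfl, hs.1.trans hs.2⟩),
    add_sub_cancel]

theorem hasDerivWithinAt_intervalIntegral_of_hasDerivWithinAt (hab : a ≤ b)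
    (hu : ContinuousOn (uncurry u) (Icc a b ×ˢ Icc t₀ t₁))
    (hu' : ContinuousOn (uncurry u') (Icc a b ×ˢ Icc t₀ t₁))
    (hderiv : ∀ x ∈ Icc a b, ∀ s ∈ Icc t₀ t₁, HasDerivWithinAt (u x ·) (u' x s) (Icc t₀ t₁) s)
    {t : ℝ} (ht : t ∈ Icc t₀ t₁) :
    HasDerivWithinAt (fun s => ∫ x in a..b, u x s) (∫ x in a..b, u' x t) (Icc t₀ t₁) t := by
  have hG := continuousOn_intervalIntegral_of_continuousOn_uncurry hab hu'
  have : Fact (t ∈ Icc t₀ t₁) := ⟨ht⟩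
  have hprim : HasDerivWithinAt (fun s => ∫ r in t₀..s, ∫ x in a..b, u' x r)
      (∫ x in a..b, u' x t) (Icc t₀ t₁) t :=
    integral_hasDerivWithinAt_right
      ((hG.mono (Icc_subset_Icc_right ht.2)).intervalIntegrable_of_Icc ht.1)
      (hG.stronglyMeasurableAtFilter_nhdsWithin measurableSet_Icc t) (hG t ht)
  have hrep (s : ℝ) (hs : s ∈ Icc t₀ t₁) :=
    integral_eq_integral_add_integral_integral_of_hasDerivWithinAt hab hu hu' hderiv hs
  exact (hprim.const_add _).congr hrep (hrep t ht)

lemma hasDerivWithinAt_integral_sq {c ct : ℝ → ℝ → ℝ} (hab : a ≤ b)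
    (hc : ContinuousOn (uncurry c) (Icc a b ×ˢ Icc t₀ t₁))
    (hct : ContinuousOn (uncurry ct) (Icc a b ×ˢ Icc t₀ t₁))
    (hdt : ∀ x ∈ Icc a b, ∀ s ∈ Icc t₀ t₁, HasDerivWithinAt (c x ·) (ct x s) (Icc t₀ t₁) s)
    {t : ℝ} (ht : t ∈ Icc t₀ t₁) :
    HasDerivWithinAt (fun s => ∫ x in a..b, c x s ^ 2) (2 * ∫ x in a..b, c x t * ct x t)
      (Icc t₀ t₁) t := by
  rw [← intervalIntegral.integral_const_mul]
  refine hasDerivWithinAt_intervalIntegral_of_hasDerivWithinAt (u := fun x s => c x s ^ 2)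
    (u' := fun x s => 2 * (c x s * ct x s)) hab (by fun_prop) (by fun_prop)
    (fun x hx s hs => ((hdt x hx s hs).pow 2).congr_deriv ?_) ht
  ring

end ParametricIntegral

lemma media_energy_identity {φ Pe Da K β g₀ : ℝ} {c ct cx cxx c₂ : ℝ → ℝ}
    (hcx : ∀ x ∈ Icc (0 : ℝ) 1, HasDerivWithinAt c (cx x) (Icc 0 1) x)
    (hcxx : ∀ x ∈ Icc (0 : ℝ) 1, HasDerivWithinAt cx (cxx x) (Icc 0 1) x)
    (hct : ContinuousOn ct (Icc 0 1)) (hc₂ : ContinuousOn c₂ (Icc 0 1))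
    (hpde : ∀ x ∈ Ioo (0 : ℝ) 1, φ * ct x = cxx x - Pe * cx x - Da * c x + Da / K * c₂ x)
    (hbc1 : cx 1 = 0) (hbc0 : cx 0 = Pe * c 0 + β * (c 0 - g₀)) :
    φ * (∫ x in (0 : ℝ)..1, c x * ct x) + Da * (∫ x in (0 : ℝ)..1, c x ^ 2) +
        (∫ x in (0 : ℝ)..1, cx x ^ 2) + Pe / 2 * c 1 ^ 2 + (β + Pe / 2) * c 0 ^ 2 =
      β * (c 0 * g₀) + Da / K * ∫ x in (0 : ℝ)..1, c x * c₂ x := by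
  have hc : ContinuousOn c (Icc 0 1) := fun x hx => (hcx x hx).continuousWithinAt
  have hcx_cont : ContinuousOn cx (Icc 0 1) := fun x hx => (hcxx x hx).continuousWithinAt
  have hint {f : ℝ → ℝ} (hf : ContinuousOn f (Icc 0 1)) : IntervalIntegrable f volume 0 1 :=
    hf.intervalIntegrable_of_Icc zero_le_one
  have hflux : ∫ x in (0 : ℝ)..1,
      (φ * (c x * ct x) + Da * c x ^ 2 + cx x ^ 2 - Da / K * (c x * c₂ x)) =
        (c 1 * cx 1 - Pe / 2 * c 1 ^ 2) - (c 0 * cx 0 - Pe / 2 * c 0 ^ 2) := by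
    refine integral_eq_sub_of_hasDerivAt_of_le (f := fun x => c x * cx x - Pe / 2 * c x ^ 2)
      zero_le_one (by fun_prop) (fun x hx => ?_) (hint (by fun_prop))
    have hc' := (hcx x (Ioo_subset_Icc_self hx)).hasDerivAt (Icc_mem_nhds hx.1 hx.2)
    have hcx' := (hcxx x (Ioo_subset_Icc_self hx)).hasDerivAt (Icc_mem_nhds hx.1 hx.2)
    refine ((hc'.mul hcx').sub ((hc'.pow 2).const_mul (Pe / 2))).congr_deriv ?_
    linear_combination -c x * hpde x hx
  rw [intervalIntegral.integral_sub, intervalIntegral.integral_add, intervalIntegral.integral_add,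
    intervalIntegral.integral_const_mul,
    intervalIntegral.integral_const_mul, intervalIntegral.integral_const_mul, hbc1, hbc0] at hflux
  · linear_combination hflux
  all_goals exact hint (by fun_prop)

theorem media_equation_energy_inequality_general
    (δ Pt Pe Da K T φ : ℝ) (hδ : 0 < δ) (hPt : 0 < Pt)
    (hDa : 0 < Da) (hK : 0 < K)
    (g : ℝ → ℝ)
    (c₂ : ℝ → ℝ → ℝ)
    (hc₂ : ContinuousOn (fun p : ℝ × ℝ => c₂ p.1 p.2) (Set.Icc (0 : ℝ) 1 ×ˢ Set.Icc 0 T))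
    (c₁ c₁t c₁x c₁xx : ℝ → ℝ → ℝ)
    (hc₁ : ContinuousOn (fun p : ℝ × ℝ => c₁ p.1 p.2) (Set.Icc (0 : ℝ) 1 ×ˢ Set.Icc 0 T))
    (hc₁t : ContinuousOn (fun p : ℝ × ℝ => c₁t p.1 p.2) (Set.Icc (0 : ℝ) 1 ×ˢ Set.Icc 0 T))
    (hdt : ∀ x ∈ Set.Icc (0 : ℝ) 1, ∀ t ∈ Set.Icc 0 T,
      HasDerivWithinAt (fun s => c₁ x s) (c₁t x t) (Set.Icc 0 T) t)
    (hdx : ∀ x ∈ Set.Icc (0 : ℝ) 1, ∀ t ∈ Set.Icc 0 T,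
      HasDerivWithinAt (fun y => c₁ y t) (c₁x x t) (Set.Icc (0 : ℝ) 1) x)
    (hdxx : ∀ x ∈ Set.Icc (0 : ℝ) 1, ∀ t ∈ Set.Icc 0 T,
      HasDerivWithinAt (fun y => c₁x y t) (c₁xx x t) (Set.Icc (0 : ℝ) 1) x)
    (hpde : ∀ x ∈ Set.Ioo (0 : ℝ) 1, ∀ t ∈ Set.Ioc 0 T,
      φ * c₁t x t = c₁xx x t - Pe * c₁x x t - Da * c₁ x t + (Da / K) * c₂ x t)
    (hbc1 : ∀ t ∈ Set.Ioc 0 T, c₁x 1 t = 0)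
    (hbc0 : ∀ t ∈ Set.Ioc 0 T,
      c₁x 0 t = Pe * c₁ 0 t + δ * Pt * (c₁ 0 t - g t)) :
    ∀ ε₂ > (0 : ℝ), ∀ ε₃ > (0 : ℝ), ∀ t ∈ Set.Ioc 0 T,
      ∃ d : ℝ,
        HasDerivWithinAt (fun s => ∫ x in (0 : ℝ)..1, (c₁ x s) ^ 2) d (Set.Icc 0 T) t ∧
        (φ / 2) * d + Da * (∫ x in (0 : ℝ)..1, (c₁ x t) ^ 2) +
            (∫ x in (0 : ℝ)..1, (c₁x x t) ^ 2) + (Pe / 2) * (c₁ 1 t) ^ 2 +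
            (δ * Pt + Pe / 2) * (c₁ 0 t) ^ 2 ≤
          δ * Pt * (ε₂ * (g t) ^ 2 + (c₁ 0 t) ^ 2 / (4 * ε₂)) +
            (Da / K) * (ε₃ * (∫ x in (0 : ℝ)..1, (c₂ x t) ^ 2) +
              (1 / (4 * ε₃)) * ∫ x in (0 : ℝ)..1, (c₁ x t) ^ 2) := by
  intro ε₂ hε₂ ε₃ hε₃ t ht
  have htT : t ∈ Icc 0 T := Ioc_subset_Icc_self ht
  refine ⟨_, hasDerivWithinAt_integral_sq zero_le_one hc₁ hc₁t hdt htT, ?_⟩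
  have henergy := media_energy_identity (fun x hx => hdx x hx t htT)
    (fun x hx => hdxx x hx t htT) (hc₁t.uncurry_right t htT) (hc₂.uncurry_right t htT)
    (fun x hx => hpde x hx t ht) (hbc1 t ht) (hbc0 t ht)
  have hboundary := mul_le_mul_of_nonneg_left
    (mul_le_mul_sq_add_sq_div hε₂ (c₁ 0 t) (g t)) (by positivity : 0 ≤ δ * Pt)
  have hsource := mul_le_mul_of_nonneg_left (integral_mul_le_mul_integral_sq_add zero_le_one hε₃
    (hc₁.uncurry_right t htT) (hc₂.uncurry_right t htT)) (by positivity : 0 ≤ Da / K)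
  linarith

/-- Energy inequality for the extracellular (media) equation: if `c₁` is a classical
solution of `φ·∂ₜc₁ = c₁_xx - Pe·c₁_x - Da·c₁ + (Da/K)·c₂` on `(0,1) × (0,T]` with
`c₁_x(1,t) = 0` and `c₁_x(0,t) = Pe·c₁(0,t) + δ·Pt·(c₁(0,t) - g(t))`, then for all
`ε₂, ε₃ > 0` and `t ∈ (0,T]`:
`(φ/2)·(d/dt)∫ c₁² + Da·∫ c₁² + ∫ c₁_x² + (Pe/2)·c₁(1,t)² + (δ·Pt + Pe/2)·c₁(0,t)²
  ≤ δ·Pt·(ε₂·g(t)² + c₁(0,t)²/(4ε₂)) + (Da/K)·(ε₃·∫ c₂² + (1/(4ε₃))·∫ c₁²)`. -/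
theorem media_equation_energy_inequality
    (δ Pt Pe Da K T φ : ℝ) (hδ : 0 < δ) (hPt : 0 < Pt) (hPe : 0 < Pe)
    (hDa : 0 < Da) (hK : 0 < K) (hT : 0 < T) (hφ : φ ∈ Set.Ioo (0 : ℝ) 1)
    (g : ℝ → ℝ) (hg : ContinuousOn g (Set.Icc 0 T))
    (c₂ : ℝ → ℝ → ℝ)
    (hc₂ : ContinuousOn (fun p : ℝ × ℝ => c₂ p.1 p.2) (Set.Icc (0 : ℝ) 1 ×ˢ Set.Icc 0 T))
    (c₁ c₁t c₁x c₁xx : ℝ → ℝ → ℝ)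
    (hc₁ : ContinuousOn (fun p : ℝ × ℝ => c₁ p.1 p.2) (Set.Icc (0 : ℝ) 1 ×ˢ Set.Icc 0 T))
    (hc₁t : ContinuousOn (fun p : ℝ × ℝ => c₁t p.1 p.2) (Set.Icc (0 : ℝ) 1 ×ˢ Set.Icc 0 T))
    (hc₁x : ContinuousOn (fun p : ℝ × ℝ => c₁x p.1 p.2) (Set.Icc (0 : ℝ) 1 ×ˢ Set.Icc 0 T))
    (hc₁xx : ContinuousOn (fun p : ℝ × ℝ => c₁xx p.1 p.2) (Set.Icc (0 : ℝ) 1 ×ˢ Set.Icc 0 T))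
    (hdt : ∀ x ∈ Set.Icc (0 : ℝ) 1, ∀ t ∈ Set.Icc 0 T,
      HasDerivWithinAt (fun s => c₁ x s) (c₁t x t) (Set.Icc 0 T) t)
    (hdx : ∀ x ∈ Set.Icc (0 : ℝ) 1, ∀ t ∈ Set.Icc 0 T,
      HasDerivWithinAt (fun y => c₁ y t) (c₁x x t) (Set.Icc (0 : ℝ) 1) x)
    (hdxx : ∀ x ∈ Set.Icc (0 : ℝ) 1, ∀ t ∈ Set.Icc 0 T,
      HasDerivWithinAt (fun y => c₁x y t) (c₁xx x t) (Set.Icc (0 : ℝ) 1) x)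
    (hpde : ∀ x ∈ Set.Ioo (0 : ℝ) 1, ∀ t ∈ Set.Ioc 0 T,
      φ * c₁t x t = c₁xx x t - Pe * c₁x x t - Da * c₁ x t + (Da / K) * c₂ x t)
    (hbc1 : ∀ t ∈ Set.Ioc 0 T, c₁x 1 t = 0)
    (hbc0 : ∀ t ∈ Set.Ioc 0 T,
      c₁x 0 t = Pe * c₁ 0 t + δ * Pt * (c₁ 0 t - g t)) :
    ∀ ε₂ > (0 : ℝ), ∀ ε₃ > (0 : ℝ), ∀ t ∈ Set.Ioc 0 T,
      ∃ d : ℝ,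
        HasDerivWithinAt (fun s => ∫ x in (0 : ℝ)..1, (c₁ x s) ^ 2) d (Set.Icc 0 T) t ∧
        (φ / 2) * d + Da * (∫ x in (0 : ℝ)..1, (c₁ x t) ^ 2) +
            (∫ x in (0 : ℝ)..1, (c₁x x t) ^ 2) + (Pe / 2) * (c₁ 1 t) ^ 2 +
            (δ * Pt + Pe / 2) * (c₁ 0 t) ^ 2 ≤
          δ * Pt * (ε₂ * (g t) ^ 2 + (c₁ 0 t) ^ 2 / (4 * ε₂)) +
            (Da / K) * (ε₃ * (∫ x in (0 : ℝ)..1, (c₂ x t) ^ 2) +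
              (1 / (4 * ε₃)) * ∫ x in (0 : ℝ)..1, (c₁ x t) ^ 2) :=
  media_equation_energy_inequality_general δ Pt Pe Da K T φ hδ hPt hDa hK g c₂ hc₂ c₁ c₁t c₁x c₁xx
    hc₁ hc₁t hdt hdx hdxx hpde hbc1 hbc0
end

section
/- Uniqueness of classical solutions of the coupled drug-release system: let δ, P̃, Pe, Da, K, l, T > 0 and φ ∈ (0,1). If (c, c₁, c₂) and (ĉ, ĉ₁, ĉ₂) are two classical solutions of the coupled drug-release system on [0,T] with the same initial data, i.e. c(x,0) = ĉ(x,0) for all x ∈ [-l,0] and c₁(x,0) = ĉ₁(x,0), c₂(x,0) = ĉ₂(x,0) for all x ∈ [0,1], then c = ĉ on [-l,0] × [0,T] and c₁ = ĉ₁, c₂ = ĉ₂ on [0,1] × [0,T]. -/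
/-!
Energy method. The problem is linear, so the difference of two solutions is a solution with zero
initial data, and it suffices to show that such a solution vanishes. Its weighted energy
`E(t) = ∫_{-l}^0 c² + ∫_0^1 e^{-Pe x} (φ c₁² + (1 - φ)/K c₂²)` is nonincreasing: the weight
`e^{-Pe x}` puts `c₁ₓₓ - Pe c₁ₓ` in the divergence form `e^{Pe x} (e^{-Pe x} c₁ₓ)ₓ`, and after
integrating by parts
`E' = -2δ ∫ cₓ² - 2 ∫ e^{-Pe x} c₁ₓ² - 2 Da ∫ e^{-Pe x} (c₁ - c₂/K)²
  - 2 Pe c₁(0)² - 2 δ P̃ (c₁(0) - c(0))² ≤ 0`.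
As `E ≥ 0` and `E(0) = 0`, the energy vanishes identically, and with it `c`, `c₁` and `c₂`.
-/

/-- A classical solution of the coupled 1-d drug-release system on `[0,T]`:
`c` (stent concentration on `[-l,0]`), `c₁` (extracellular) and `c₂` (intracellular,
on `[0,1]`), together with their partial derivatives `ct, cx, cxx`, `c₁t, c₁x, c₁xx`,
`c₂t`, all continuous on the respective space-time boxes, satisfying the PDEs,
boundary and interface conditions of the model. -/
structure IsClassicalSolution (δ Pt Pe Da K l T φ : ℝ)
    (c ct cx cxx c₁ c₁t c₁x c₁xx c₂ c₂t : ℝ → ℝ → ℝ) : Prop where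
  cont_c : ContinuousOn (fun p : ℝ × ℝ => c p.1 p.2) (Set.Icc (-l) 0 ×ˢ Set.Icc 0 T)
  cont_ct : ContinuousOn (fun p : ℝ × ℝ => ct p.1 p.2) (Set.Icc (-l) 0 ×ˢ Set.Icc 0 T)
  cont_cx : ContinuousOn (fun p : ℝ × ℝ => cx p.1 p.2) (Set.Icc (-l) 0 ×ˢ Set.Icc 0 T)
  cont_cxx : ContinuousOn (fun p : ℝ × ℝ => cxx p.1 p.2) (Set.Icc (-l) 0 ×ˢ Set.Icc 0 T)
  cont_c₁ : ContinuousOn (fun p : ℝ × ℝ => c₁ p.1 p.2) (Set.Icc (0 : ℝ) 1 ×ˢ Set.Icc 0 T)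
  cont_c₁t : ContinuousOn (fun p : ℝ × ℝ => c₁t p.1 p.2) (Set.Icc (0 : ℝ) 1 ×ˢ Set.Icc 0 T)
  cont_c₁x : ContinuousOn (fun p : ℝ × ℝ => c₁x p.1 p.2) (Set.Icc (0 : ℝ) 1 ×ˢ Set.Icc 0 T)
  cont_c₁xx : ContinuousOn (fun p : ℝ × ℝ => c₁xx p.1 p.2) (Set.Icc (0 : ℝ) 1 ×ˢ Set.Icc 0 T)
  cont_c₂ : ContinuousOn (fun p : ℝ × ℝ => c₂ p.1 p.2) (Set.Icc (0 : ℝ) 1 ×ˢ Set.Icc 0 T)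
  cont_c₂t : ContinuousOn (fun p : ℝ × ℝ => c₂t p.1 p.2) (Set.Icc (0 : ℝ) 1 ×ˢ Set.Icc 0 T)
  hasDeriv_ct : ∀ x ∈ Set.Icc (-l) 0, ∀ t ∈ Set.Icc 0 T,
    HasDerivWithinAt (fun s => c x s) (ct x t) (Set.Icc 0 T) t
  hasDeriv_cx : ∀ x ∈ Set.Icc (-l) 0, ∀ t ∈ Set.Icc 0 T,
    HasDerivWithinAt (fun y => c y t) (cx x t) (Set.Icc (-l) 0) x
  hasDeriv_cxx : ∀ x ∈ Set.Icc (-l) 0, ∀ t ∈ Set.Icc 0 T,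
    HasDerivWithinAt (fun y => cx y t) (cxx x t) (Set.Icc (-l) 0) x
  hasDeriv_c₁t : ∀ x ∈ Set.Icc (0 : ℝ) 1, ∀ t ∈ Set.Icc 0 T,
    HasDerivWithinAt (fun s => c₁ x s) (c₁t x t) (Set.Icc 0 T) t
  hasDeriv_c₁x : ∀ x ∈ Set.Icc (0 : ℝ) 1, ∀ t ∈ Set.Icc 0 T,
    HasDerivWithinAt (fun y => c₁ y t) (c₁x x t) (Set.Icc (0 : ℝ) 1) x
  hasDeriv_c₁xx : ∀ x ∈ Set.Icc (0 : ℝ) 1, ∀ t ∈ Set.Icc 0 T,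
    HasDerivWithinAt (fun y => c₁x y t) (c₁xx x t) (Set.Icc (0 : ℝ) 1) x
  hasDeriv_c₂t : ∀ x ∈ Set.Icc (0 : ℝ) 1, ∀ t ∈ Set.Icc 0 T,
    HasDerivWithinAt (fun s => c₂ x s) (c₂t x t) (Set.Icc 0 T) t
  pde_c : ∀ x ∈ Set.Ioo (-l) 0, ∀ t ∈ Set.Ioc 0 T, ct x t = δ * cxx x t
  bc_lumen : ∀ t ∈ Set.Ioc 0 T, cx (-l) t = 0
  bc_interface_c : ∀ t ∈ Set.Ioc 0 T, cx 0 t + Pt * c 0 t = Pt * c₁ 0 t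
  pde_c₁ : ∀ x ∈ Set.Ioo (0 : ℝ) 1, ∀ t ∈ Set.Ioc 0 T,
    φ * c₁t x t = c₁xx x t - Pe * c₁x x t - Da * c₁ x t + (Da / K) * c₂ x t
  bc_interface_c₁ : ∀ t ∈ Set.Ioc 0 T, c₁x 0 t - Pe * c₁ 0 t = δ * cx 0 t
  bc_adventitia : ∀ t ∈ Set.Ioc 0 T, c₁x 1 t = 0
  ode_c₂ : ∀ x ∈ Set.Icc (0 : ℝ) 1, ∀ t ∈ Set.Ioc 0 T,
    (1 - φ) * c₂t x t + (Da / K) * c₂ x t = Da * c₁ x t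

open Set MeasureTheory intervalIntegral
open scoped Interval

section ParametricIntegral

variable {a b c d : ℝ} {g gt : ℝ → ℝ → ℝ}

theorem continuousOn_intervalIntegral_of_continuousOn_prod (hab : a ≤ b)
    (hg : ContinuousOn (fun p : ℝ × ℝ => g p.1 p.2) (Icc a b ×ˢ Icc c d)) :
    ContinuousOn (fun t => ∫ x in a..b, g x t) (Icc c d) := by
  rcases lt_or_ge d c with hdc | hcd
  · simp [Icc_eq_empty_of_lt hdc]
  -- extend `g` continuously to the whole plane by clamping both variables
  set G : ℝ → ℝ → ℝ := fun t x => g (projIcc a b hab x) (projIcc c d hcd t)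
  have hG : Continuous (Function.uncurry G) :=
    hg.comp_continuous
      (f := fun p : ℝ × ℝ => ((projIcc a b hab p.2 : ℝ), (projIcc c d hcd p.1 : ℝ))) (by fun_prop)
      fun p => ⟨(projIcc a b hab p.2).2, (projIcc c d hcd p.1).2⟩
  refine (continuous_parametric_intervalIntegral_of_continuous' hG a b).continuousOn.congr
    fun t ht => integral_congr fun x hx => ?_
  rw [uIcc_of_le hab] at hx
  simp [G, projIcc_of_mem _ hx, projIcc_of_mem _ ht]

theorem hasDerivAt_intervalIntegral_of_hasDerivWithinAt (hab : a ≤ b)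
    (hg : ContinuousOn (fun p : ℝ × ℝ => g p.1 p.2) (Icc a b ×ˢ Icc c d))
    (hgt : ContinuousOn (fun p : ℝ × ℝ => gt p.1 p.2) (Icc a b ×ˢ Icc c d))
    (hd : ∀ x ∈ Icc a b, ∀ t ∈ Icc c d, HasDerivWithinAt (g x ·) (gt x t) (Icc c d) t)
    {t₀ : ℝ} (ht₀ : t₀ ∈ Ioo c d) :
    HasDerivAt (fun t => ∫ x in a..b, g x t) (∫ x in a..b, gt x t₀) t₀ := by
  obtain ⟨C, hC⟩ := (isCompact_Icc.prod isCompact_Icc).exists_bound_of_continuousOn hgt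
  have hIoc : Ι a b ⊆ Icc a b := by rw [uIoc_of_le hab]; exact Ioc_subset_Icc_self
  have hslice {f : ℝ → ℝ → ℝ}
      (hf : ContinuousOn (fun p : ℝ × ℝ => f p.1 p.2) (Icc a b ×ˢ Icc c d))
      {t : ℝ} (ht : t ∈ Ioo c d) : AEStronglyMeasurable (f · t) (volume.restrict (Ι a b)) :=
    ((hf.uncurry_right t (Ioo_subset_Icc_self ht)).mono hIoc).aestronglyMeasurable
      measurableSet_uIoc
  refine (hasDerivAt_integral_of_dominated_loc_of_deriv_le (F := fun t x => g x t)
    (F' := fun t x => gt x t) (bound := fun _ => C) (Ioo_mem_nhds ht₀.1 ht₀.2) ?_ ?_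
    (hslice hgt ht₀) ?_ intervalIntegrable_const ?_).2
  · filter_upwards [Ioo_mem_nhds ht₀.1 ht₀.2] with t ht using hslice hg ht
  · exact (hg.uncurry_right t₀ (Ioo_subset_Icc_self ht₀)).intervalIntegrable_of_Icc hab
  · exact ae_of_all _ fun x hx t ht => hC (x, t) ⟨hIoc hx, Ioo_subset_Icc_self ht⟩
  · exact ae_of_all _ fun x hx t ht =>
      (hd x (hIoc hx) t (Ioo_subset_Icc_self ht)).hasDerivAt (Icc_mem_nhds ht.1 ht.2)

end ParametricIntegral

theorem integral_mul_deriv_le_of_nonneg {a b : ℝ} (hab : a ≤ b) {f f' g g' : ℝ → ℝ}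
    (hf : ∀ x ∈ Icc a b, HasDerivWithinAt f (f' x) (Icc a b) x)
    (hg : ∀ x ∈ Icc a b, HasDerivWithinAt g (g' x) (Icc a b) x)
    (hf' : ContinuousOn f' (Icc a b)) (hg' : ContinuousOn g' (Icc a b))
    (hnonneg : ∀ x ∈ Icc a b, 0 ≤ f' x * g x) :
    ∫ x in a..b, f x * g' x ≤ f b * g b - f a * g a := by
  rw [← uIcc_of_le hab] at hf hg hf' hg'
  rw [integral_mul_deriv_eq_deriv_mul_of_hasDerivWithinAt hf hg hf'.intervalIntegrable
    hg'.intervalIntegrable]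
  linarith [integral_nonneg (μ := volume) hab hnonneg]

theorem eqOn_zero_of_integral_eq_zero {a b : ℝ} (hab : a < b) {f : ℝ → ℝ}
    (hf : ContinuousOn f (Icc a b)) (hnonneg : ∀ x ∈ Icc a b, 0 ≤ f x)
    (hint : ∫ x in a..b, f x = 0) : EqOn f 0 (Icc a b) := by
  intro x hx
  by_contra hne
  have := integral_pos hab hf (fun y hy => hnonneg y (Ioc_subset_Icc_self hy))
    ⟨x, hx, (hnonneg x hx).lt_of_ne' hne⟩
  exact this.ne' hint

noncomputable def drugReleaseEnergy (Pe K l φ : ℝ) (c c₁ c₂ : ℝ → ℝ → ℝ) (t : ℝ) : ℝ :=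
  (∫ x in (-l)..0, c x t ^ 2) +
    ∫ x in (0 : ℝ)..1, Real.exp (-Pe * x) * (φ * c₁ x t ^ 2 + (1 - φ) / K * c₂ x t ^ 2)

theorem drugReleaseEnergy_eq_zero {Pe K l φ : ℝ} {c c₁ c₂ : ℝ → ℝ → ℝ} {t : ℝ} (hl : 0 ≤ l)
    (hc : ∀ x ∈ Icc (-l) 0, c x t = 0) (hc₁ : ∀ x ∈ Icc (0 : ℝ) 1, c₁ x t = 0)
    (hc₂ : ∀ x ∈ Icc (0 : ℝ) 1, c₂ x t = 0) :
    drugReleaseEnergy Pe K l φ c c₁ c₂ t = 0 := by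
  have hstent : EqOn (fun x => c x t ^ 2) 0 (uIcc (-l) 0) := fun x hx => by
    rw [uIcc_of_le (neg_nonpos.2 hl)] at hx
    simp [hc x hx]
  have hwall : EqOn (fun x => Real.exp (-Pe * x) * (φ * c₁ x t ^ 2 + (1 - φ) / K * c₂ x t ^ 2))
      0 (uIcc 0 1) := fun x hx => by
    rw [uIcc_of_le zero_le_one] at hx
    simp [hc₁ x hx, hc₂ x hx]
  rw [drugReleaseEnergy, integral_congr hstent, integral_congr hwall]
  simp

namespace IsClassicalSolution

variable {δ Pt Pe Da K l T φ : ℝ} {c ct cx cxx c₁ c₁t c₁x c₁xx c₂ c₂t : ℝ → ℝ → ℝ}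

theorem sub {c' ct' cx' cxx' c₁' c₁t' c₁x' c₁xx' c₂' c₂t' : ℝ → ℝ → ℝ}
    (h : IsClassicalSolution δ Pt Pe Da K l T φ c ct cx cxx c₁ c₁t c₁x c₁xx c₂ c₂t)
    (h' : IsClassicalSolution δ Pt Pe Da K l T φ c' ct' cx' cxx' c₁' c₁t' c₁x' c₁xx' c₂' c₂t') :
    IsClassicalSolution δ Pt Pe Da K l T φ (c - c') (ct - ct') (cx - cx') (cxx - cxx')
      (c₁ - c₁') (c₁t - c₁t') (c₁x - c₁x') (c₁xx - c₁xx') (c₂ - c₂') (c₂t - c₂t') where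
  cont_c := h.cont_c.sub h'.cont_c
  cont_ct := h.cont_ct.sub h'.cont_ct
  cont_cx := h.cont_cx.sub h'.cont_cx
  cont_cxx := h.cont_cxx.sub h'.cont_cxx
  cont_c₁ := h.cont_c₁.sub h'.cont_c₁
  cont_c₁t := h.cont_c₁t.sub h'.cont_c₁t
  cont_c₁x := h.cont_c₁x.sub h'.cont_c₁x
  cont_c₁xx := h.cont_c₁xx.sub h'.cont_c₁xx
  cont_c₂ := h.cont_c₂.sub h'.cont_c₂
  cont_c₂t := h.cont_c₂t.sub h'.cont_c₂t
  hasDeriv_ct x hx t ht := (h.hasDeriv_ct x hx t ht).sub (h'.hasDeriv_ct x hx t ht)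
  hasDeriv_cx x hx t ht := (h.hasDeriv_cx x hx t ht).sub (h'.hasDeriv_cx x hx t ht)
  hasDeriv_cxx x hx t ht := (h.hasDeriv_cxx x hx t ht).sub (h'.hasDeriv_cxx x hx t ht)
  hasDeriv_c₁t x hx t ht := (h.hasDeriv_c₁t x hx t ht).sub (h'.hasDeriv_c₁t x hx t ht)
  hasDeriv_c₁x x hx t ht := (h.hasDeriv_c₁x x hx t ht).sub (h'.hasDeriv_c₁x x hx t ht)
  hasDeriv_c₁xx x hx t ht := (h.hasDeriv_c₁xx x hx t ht).sub (h'.hasDeriv_c₁xx x hx t ht)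
  hasDeriv_c₂t x hx t ht := (h.hasDeriv_c₂t x hx t ht).sub (h'.hasDeriv_c₂t x hx t ht)
  pde_c x hx t ht := by
    simp only [Pi.sub_apply]
    linear_combination h.pde_c x hx t ht - h'.pde_c x hx t ht
  bc_lumen t ht := by
    simp only [Pi.sub_apply]
    linear_combination h.bc_lumen t ht - h'.bc_lumen t ht
  bc_interface_c t ht := by
    simp only [Pi.sub_apply]
    linear_combination h.bc_interface_c t ht - h'.bc_interface_c t ht
  pde_c₁ x hx t ht := by
    simp only [Pi.sub_apply]
    linear_combination h.pde_c₁ x hx t ht - h'.pde_c₁ x hx t ht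
  bc_interface_c₁ t ht := by
    simp only [Pi.sub_apply]
    linear_combination h.bc_interface_c₁ t ht - h'.bc_interface_c₁ t ht
  bc_adventitia t ht := by
    simp only [Pi.sub_apply]
    linear_combination h.bc_adventitia t ht - h'.bc_adventitia t ht
  ode_c₂ x hx t ht := by
    simp only [Pi.sub_apply]
    linear_combination h.ode_c₂ x hx t ht - h'.ode_c₂ x hx t ht

variable (hsol : IsClassicalSolution δ Pt Pe Da K l T φ c ct cx cxx c₁ c₁t c₁x c₁xx c₂ c₂t)
include hsol

theorem continuousOn_wall_density :
    ContinuousOn (fun p : ℝ × ℝ => Real.exp (-Pe * p.1) *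
      (φ * c₁ p.1 p.2 ^ 2 + (1 - φ) / K * c₂ p.1 p.2 ^ 2)) (Icc (0 : ℝ) 1 ×ˢ Icc 0 T) :=
  (Continuous.continuousOn (by fun_prop)).mul
    ((continuousOn_const.mul (hsol.cont_c₁.pow 2)).add
      (continuousOn_const.mul (hsol.cont_c₂.pow 2)))

theorem continuousOn_energy (hl : 0 ≤ l) :
    ContinuousOn (drugReleaseEnergy Pe K l φ c c₁ c₂) (Icc 0 T) :=
  (continuousOn_intervalIntegral_of_continuousOn_prod (neg_nonpos.2 hl) (hsol.cont_c.pow 2)).add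
    (continuousOn_intervalIntegral_of_continuousOn_prod zero_le_one hsol.continuousOn_wall_density)

theorem hasDerivAt_energy (hl : 0 ≤ l) {t : ℝ} (ht : t ∈ Ioo 0 T) :
    HasDerivAt (drugReleaseEnergy Pe K l φ c c₁ c₂)
      ((∫ x in (-l)..0, 2 * c x t * ct x t) +
        ∫ x in (0 : ℝ)..1, Real.exp (-Pe * x) *
          (2 * φ * c₁ x t * c₁t x t + 2 * (1 - φ) / K * c₂ x t * c₂t x t)) t := by
  have hstent := hasDerivAt_intervalIntegral_of_hasDerivWithinAt
    (gt := fun x s => 2 * c x s * ct x s) (neg_nonpos.2 hl)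
    (hsol.cont_c.pow 2) ((continuousOn_const.mul hsol.cont_c).mul hsol.cont_ct)
    (fun x hx s hs => ((hsol.hasDeriv_ct x hx s hs).pow 2).congr_deriv (by ring)) ht
  have hwall := hasDerivAt_intervalIntegral_of_hasDerivWithinAt (gt := fun x s =>
      Real.exp (-Pe * x) * (2 * φ * c₁ x s * c₁t x s + 2 * (1 - φ) / K * c₂ x s * c₂t x s))
    zero_le_one hsol.continuousOn_wall_density
    ((Continuous.continuousOn (by fun_prop)).mul
      ((((continuousOn_const.mul hsol.cont_c₁).mul hsol.cont_c₁t)).add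
        ((continuousOn_const.mul hsol.cont_c₂).mul hsol.cont_c₂t)))
    (fun x hx s hs => ((((hsol.hasDeriv_c₁t x hx s hs).pow 2).const_mul φ).add
      (((hsol.hasDeriv_c₂t x hx s hs).pow 2).const_mul ((1 - φ) / K))).const_mul
        (Real.exp (-Pe * x)) |>.congr_deriv (by ring)) ht
  exact hstent.add hwall

theorem integral_stent_rate_le (hδ : 0 ≤ δ) (hl : 0 ≤ l) {t : ℝ} (ht : t ∈ Ioc 0 T) :
    ∫ x in (-l)..0, 2 * c x t * ct x t ≤ 2 * δ * (c 0 t * cx 0 t) := by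
  have htI : t ∈ Icc 0 T := Ioc_subset_Icc_self ht
  have hc := hsol.cont_c.uncurry_right t htI
  have hcx := hsol.cont_cx.uncurry_right t htI
  have hcxx := hsol.cont_cxx.uncurry_right t htI
  have hct := hsol.cont_ct.uncurry_right t htI
  have hl' : -l ≤ 0 := neg_nonpos.2 hl
  calc ∫ x in (-l)..0, 2 * c x t * ct x t
      ≤ ∫ x in (-l)..0, 2 * δ * (c x t * cxx x t) :=
        integral_mono_on_of_le_Ioo hl'
          (((continuousOn_const.mul hc).mul hct).intervalIntegrable_of_Icc hl')
          ((continuousOn_const.mul (hc.mul hcxx)).intervalIntegrable_of_Icc hl')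
          fun x hx => by rw [hsol.pde_c x hx t ht]; linarith
    _ = 2 * δ * ∫ x in (-l)..0, c x t * cxx x t := integral_const_mul _ _
    _ ≤ 2 * δ * (c 0 t * cx 0 t - c (-l) t * cx (-l) t) := by
        gcongr
        exact integral_mul_deriv_le_of_nonneg hl' (fun x hx => hsol.hasDeriv_cx x hx t htI)
          (fun x hx => hsol.hasDeriv_cxx x hx t htI) hcx hcxx fun x _ => mul_self_nonneg _
    _ = 2 * δ * (c 0 t * cx 0 t) := by rw [hsol.bc_lumen t ht]; ring

theorem integral_wall_rate_le (hDa : 0 ≤ Da) {t : ℝ} (ht : t ∈ Ioc 0 T) :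
    ∫ x in (0 : ℝ)..1, Real.exp (-Pe * x) *
        (2 * φ * c₁ x t * c₁t x t + 2 * (1 - φ) / K * c₂ x t * c₂t x t) ≤
      -2 * (c₁ 0 t * c₁x 0 t) := by
  have htI : t ∈ Icc 0 T := Ioc_subset_Icc_self ht
  have hc₁ := hsol.cont_c₁.uncurry_right t htI
  have hc₁t := hsol.cont_c₁t.uncurry_right t htI
  have hc₁x := hsol.cont_c₁x.uncurry_right t htI
  have hc₁xx := hsol.cont_c₁xx.uncurry_right t htI
  have hc₂ := hsol.cont_c₂.uncurry_right t htI
  have hc₂t := hsol.cont_c₂t.uncurry_right t htI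
  have hρ : Continuous fun x : ℝ => Real.exp (-Pe * x) := by fun_prop
  set flux : ℝ → ℝ := fun x => Real.exp (-Pe * x) * c₁x x t
  set divFlux : ℝ → ℝ := fun x => Real.exp (-Pe * x) * (c₁xx x t - Pe * c₁x x t)
  have hflux : ∀ x ∈ Icc (0 : ℝ) 1, HasDerivWithinAt flux (divFlux x) (Icc 0 1) x := by
    intro x hx
    have hρx : HasDerivAt (fun y : ℝ => Real.exp (-Pe * y)) (Real.exp (-Pe * x) * -Pe) x := by
      simpa using ((hasDerivAt_id x).const_mul (-Pe)).exp
    exact (hρx.hasDerivWithinAt.mul (hsol.hasDeriv_c₁xx x hx t htI)).congr_deriv (by ring)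
  have hdivFlux : ContinuousOn divFlux (Icc 0 1) :=
    hρ.continuousOn.mul (hc₁xx.sub (continuousOn_const.mul hc₁x))
  calc ∫ x in (0 : ℝ)..1, Real.exp (-Pe * x) *
        (2 * φ * c₁ x t * c₁t x t + 2 * (1 - φ) / K * c₂ x t * c₂t x t)
      ≤ ∫ x in (0 : ℝ)..1, 2 * (c₁ x t * divFlux x) := by
        refine integral_mono_on_of_le_Ioo zero_le_one ?_ ?_ fun x hx => ?_
        · exact (hρ.continuousOn.mul ((((continuousOn_const.mul hc₁).mul hc₁t)).add
            ((continuousOn_const.mul hc₂).mul hc₂t))).intervalIntegrable_of_Icc zero_le_one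
        · exact (continuousOn_const.mul (hc₁.mul hdivFlux)).intervalIntegrable_of_Icc
            zero_le_one
        -- the exchange terms add up to `-2 Da e^{-Pe x} (c₁ - c₂ / K)²`
        have hexchange := mul_nonneg (mul_nonneg hDa (Real.exp_pos (-Pe * x)).le)
          (sq_nonneg (c₁ x t - c₂ x t / K))
        linear_combination (2 * Real.exp (-Pe * x) * c₁ x t) * hsol.pde_c₁ x hx t ht +
          (2 * Real.exp (-Pe * x) * c₂ x t / K) * hsol.ode_c₂ x (Ioo_subset_Icc_self hx) t ht +
          2 * hexchange
    _ = 2 * ∫ x in (0 : ℝ)..1, c₁ x t * divFlux x := integral_const_mul _ _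
    _ ≤ 2 * (c₁ 1 t * flux 1 - c₁ 0 t * flux 0) := by
        gcongr
        exact integral_mul_deriv_le_of_nonneg zero_le_one
          (fun x hx => hsol.hasDeriv_c₁x x hx t htI) hflux hc₁x hdivFlux
          fun x _ => by
            rw [mul_left_comm]; exact mul_nonneg (Real.exp_pos _).le (mul_self_nonneg _)
    _ = -2 * (c₁ 0 t * c₁x 0 t) := by simp [flux, hsol.bc_adventitia t ht]

theorem interface_flux_le (hδ : 0 ≤ δ) (hPt : 0 ≤ Pt) (hPe : 0 ≤ Pe) {t : ℝ}
    (ht : t ∈ Ioc 0 T) : δ * (c 0 t * cx 0 t) ≤ c₁ 0 t * c₁x 0 t := by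
  have hbalance : c₁ 0 t * c₁x 0 t - δ * (c 0 t * cx 0 t) =
      Pe * c₁ 0 t ^ 2 + δ * Pt * (c₁ 0 t - c 0 t) ^ 2 := by
    linear_combination c₁ 0 t * hsol.bc_interface_c₁ t ht +
      δ * (c₁ 0 t - c 0 t) * hsol.bc_interface_c t ht
  nlinarith [mul_nonneg hPe (sq_nonneg (c₁ 0 t)),
    mul_nonneg (mul_nonneg hδ hPt) (sq_nonneg (c₁ 0 t - c 0 t))]

theorem antitoneOn_energy (hδ : 0 ≤ δ) (hPt : 0 ≤ Pt) (hPe : 0 ≤ Pe) (hDa : 0 ≤ Da)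
    (hl : 0 ≤ l) : AntitoneOn (drugReleaseEnergy Pe K l φ c c₁ c₂) (Icc 0 T) := by
  refine antitoneOn_of_hasDerivWithinAt_nonpos (convex_Icc 0 T) (hsol.continuousOn_energy hl)
    (fun t ht => (hsol.hasDerivAt_energy hl (by rwa [interior_Icc] at ht)).hasDerivWithinAt)
    fun t ht => ?_
  rw [interior_Icc] at ht
  have ht' : t ∈ Ioc 0 T := Ioo_subset_Ioc_self ht
  linarith [hsol.integral_stent_rate_le hδ hl ht', hsol.integral_wall_rate_le hDa ht',
      hsol.interface_flux_le hδ hPt hPe ht']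

theorem eq_zero_of_energy_nonpos (hK : 0 < K) (hl : 0 < l) (hφ : φ ∈ Ioo 0 1) {t : ℝ}
    (ht : t ∈ Icc 0 T) (hE : drugReleaseEnergy Pe K l φ c c₁ c₂ t ≤ 0) :
    (∀ x ∈ Icc (-l) 0, c x t = 0) ∧ (∀ x ∈ Icc (0 : ℝ) 1, c₁ x t = 0) ∧
      (∀ x ∈ Icc (0 : ℝ) 1, c₂ x t = 0) := by
  have hφK : 0 < (1 - φ) / K := div_pos (sub_pos.2 hφ.2) hK
  have hstent_nonneg : ∀ x ∈ Icc (-l) 0, 0 ≤ c x t ^ 2 := fun x _ => sq_nonneg _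
  have hwall_nonneg : ∀ x ∈ Icc (0 : ℝ) 1,
      0 ≤ Real.exp (-Pe * x) * (φ * c₁ x t ^ 2 + (1 - φ) / K * c₂ x t ^ 2) := fun x _ =>
    mul_nonneg (Real.exp_pos _).le
      (add_nonneg (mul_nonneg hφ.1.le (sq_nonneg _)) (mul_nonneg hφK.le (sq_nonneg _)))
  have hstent₀ := integral_nonneg (μ := volume) (neg_nonpos.2 hl.le) hstent_nonneg
  have hwall₀ := integral_nonneg (μ := volume) zero_le_one hwall_nonneg
  rw [drugReleaseEnergy] at hE
  have hstent : ∫ x in (-l)..0, c x t ^ 2 = 0 := by linarith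
  have hwall : ∫ x in (0 : ℝ)..1,
      Real.exp (-Pe * x) * (φ * c₁ x t ^ 2 + (1 - φ) / K * c₂ x t ^ 2) = 0 := by linarith
  have hc := eqOn_zero_of_integral_eq_zero (neg_neg_iff_pos.2 hl)
    ((hsol.cont_c.uncurry_right t ht).pow 2) hstent_nonneg hstent
  have hc₁₂ := eqOn_zero_of_integral_eq_zero zero_lt_one
    (hsol.continuousOn_wall_density.uncurry_right (f := fun x s =>
      Real.exp (-Pe * x) * (φ * c₁ x s ^ 2 + (1 - φ) / K * c₂ x s ^ 2)) t ht) hwall_nonneg hwall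
  refine ⟨fun x hx => pow_eq_zero_iff two_ne_zero |>.1 (hc hx), fun x hx => ?_, fun x hx => ?_⟩
  all_goals
    have h := (mul_eq_zero.1 (hc₁₂ hx)).resolve_left (Real.exp_pos _).ne'
    obtain ⟨h₁, h₂⟩ := (add_eq_zero_iff_of_nonneg (mul_nonneg hφ.1.le (sq_nonneg _))
      (mul_nonneg hφK.le (sq_nonneg _))).1 h
  · simpa [hφ.1.ne'] using h₁
  · simpa [hφK.ne'] using h₂

theorem eq_zero_of_initial_eq_zero (hδ : 0 ≤ δ) (hPt : 0 ≤ Pt) (hPe : 0 ≤ Pe) (hDa : 0 ≤ Da)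
    (hK : 0 < K) (hl : 0 < l) (hφ : φ ∈ Ioo 0 1) (hic : ∀ x ∈ Icc (-l) 0, c x 0 = 0)
    (hic₁ : ∀ x ∈ Icc (0 : ℝ) 1, c₁ x 0 = 0) (hic₂ : ∀ x ∈ Icc (0 : ℝ) 1, c₂ x 0 = 0)
    {t : ℝ} (ht : t ∈ Icc 0 T) :
    (∀ x ∈ Icc (-l) 0, c x t = 0) ∧ (∀ x ∈ Icc (0 : ℝ) 1, c₁ x t = 0) ∧
      (∀ x ∈ Icc (0 : ℝ) 1, c₂ x t = 0) :=
  hsol.eq_zero_of_energy_nonpos hK hl hφ ht <|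
    (hsol.antitoneOn_energy hδ hPt hPe hDa hl.le ⟨le_rfl, ht.1.trans ht.2⟩ ht ht.1).trans_eq
      (drugReleaseEnergy_eq_zero hl.le hic hic₁ hic₂)

end IsClassicalSolution

theorem coupled_system_uniqueness_general
    (δ Pt Pe Da K l T φ : ℝ)
    (hδ : 0 < δ) (hPt : 0 < Pt) (hPe : 0 < Pe) (hDa : 0 < Da) (hK : 0 < K)
    (hl : 0 < l) (hφ : φ ∈ Set.Ioo (0 : ℝ) 1)
    (c ct cx cxx c₁ c₁t c₁x c₁xx c₂ c₂t : ℝ → ℝ → ℝ)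
    (c' ct' cx' cxx' c₁' c₁t' c₁x' c₁xx' c₂' c₂t' : ℝ → ℝ → ℝ)
    (hsol : IsClassicalSolution δ Pt Pe Da K l T φ c ct cx cxx c₁ c₁t c₁x c₁xx c₂ c₂t)
    (hsol' : IsClassicalSolution δ Pt Pe Da K l T φ
      c' ct' cx' cxx' c₁' c₁t' c₁x' c₁xx' c₂' c₂t')
    (hic : ∀ x ∈ Set.Icc (-l) 0, c x 0 = c' x 0)
    (hic₁ : ∀ x ∈ Set.Icc (0 : ℝ) 1, c₁ x 0 = c₁' x 0)
    (hic₂ : ∀ x ∈ Set.Icc (0 : ℝ) 1, c₂ x 0 = c₂' x 0) :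
    (∀ x ∈ Set.Icc (-l) 0, ∀ t ∈ Set.Icc 0 T, c x t = c' x t) ∧
    (∀ x ∈ Set.Icc (0 : ℝ) 1, ∀ t ∈ Set.Icc 0 T, c₁ x t = c₁' x t) ∧
    (∀ x ∈ Set.Icc (0 : ℝ) 1, ∀ t ∈ Set.Icc 0 T, c₂ x t = c₂' x t) := by
  have hzero {t : ℝ} (ht : t ∈ Icc 0 T) := (hsol.sub hsol').eq_zero_of_initial_eq_zero
    hδ.le hPt.le hPe.le hDa.le hK hl hφ (fun x hx => sub_eq_zero.2 (hic x hx))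
    (fun x hx => sub_eq_zero.2 (hic₁ x hx)) (fun x hx => sub_eq_zero.2 (hic₂ x hx)) ht
  exact ⟨fun x hx t ht => sub_eq_zero.1 ((hzero ht).1 x hx),
    fun x hx t ht => sub_eq_zero.1 ((hzero ht).2.1 x hx),
    fun x hx t ht => sub_eq_zero.1 ((hzero ht).2.2 x hx)⟩

/-- Uniqueness of classical solutions of the coupled drug-release system: two classical
solutions with the same initial data coincide on their space-time domains. -/
theorem coupled_system_uniqueness
    (δ Pt Pe Da K l T φ : ℝ)
    (hδ : 0 < δ) (hPt : 0 < Pt) (hPe : 0 < Pe) (hDa : 0 < Da) (hK : 0 < K)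
    (hl : 0 < l) (hT : 0 < T) (hφ : φ ∈ Set.Ioo (0 : ℝ) 1)
    (c ct cx cxx c₁ c₁t c₁x c₁xx c₂ c₂t : ℝ → ℝ → ℝ)
    (c' ct' cx' cxx' c₁' c₁t' c₁x' c₁xx' c₂' c₂t' : ℝ → ℝ → ℝ)
    (hsol : IsClassicalSolution δ Pt Pe Da K l T φ c ct cx cxx c₁ c₁t c₁x c₁xx c₂ c₂t)
    (hsol' : IsClassicalSolution δ Pt Pe Da K l T φ
      c' ct' cx' cxx' c₁' c₁t' c₁x' c₁xx' c₂' c₂t')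
    (hic : ∀ x ∈ Set.Icc (-l) 0, c x 0 = c' x 0)
    (hic₁ : ∀ x ∈ Set.Icc (0 : ℝ) 1, c₁ x 0 = c₁' x 0)
    (hic₂ : ∀ x ∈ Set.Icc (0 : ℝ) 1, c₂ x 0 = c₂' x 0) :
    (∀ x ∈ Set.Icc (-l) 0, ∀ t ∈ Set.Icc 0 T, c x t = c' x t) ∧
    (∀ x ∈ Set.Icc (0 : ℝ) 1, ∀ t ∈ Set.Icc 0 T, c₁ x t = c₁' x t) ∧
    (∀ x ∈ Set.Icc (0 : ℝ) 1, ∀ t ∈ Set.Icc 0 T, c₂ x t = c₂' x t) :=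
  coupled_system_uniqueness_general δ Pt Pe Da K l T φ hδ hPt hPe hDa hK hl hφ c ct cx cxx c₁ c₁t
    c₁x c₁xx c₂ c₂t c' ct' cx' cxx' c₁' c₁t' c₁x' c₁xx' c₂' c₂t' hsol hsol' hic hic₁ hic₂
end
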